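/- Let k ≥ 2 be an integer and let G be a simple graph on n ≥ k vertices. Then the number of k-element vertex subsets A ⊆ V(G) with the property that there exists a vertex v ∈ A satisfying |deg_A(v) − (k−1)·deg_G(v)/n| > √(k·log k) is at most (2/k)·n^k/k!. -/

import Mathlib

set_option maxHeartbeats 1000000

open scoped Classical

/-- The degree of the vertex `v` in the simple graph `G`. -/
noncomputable def graphDeg {V : Type*} [Fintype V] (G : SimpleGraph V) (v : V) : ℕ :=
  (Finset.univ.filter (fun u => G.Adj v u)).card

/-- The degree of the vertex `v` in the subgraph of `G` induced on `A`, i.e. the number of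
vertices of `A` adjacent to `v` in `G`. -/
noncomputable def graphDegIn {V : Type*} (G : SimpleGraph V) (A : Finset V) (v : V) : ℕ :=
  (A.filter (fun u => G.Adj v u)).card

section Aux

open Real Set Finset

lemma bern_aux (p : ℝ) (hp0 : 0 ≤ p) (hp1 : p ≤ 1) {s : ℝ} (hs : 0 ≤ s) :
    (1 - p) + p * Real.exp s ≤ Real.exp (p * s + s ^ 2 / 8) := by
  have hq0 : 0 ≤ 1 - p := by linarith
  -- positivity of q + p e^x for x ≥ 0
  have hpos : ∀ x : ℝ, 0 ≤ x → 0 < (1-p) + p * Real.exp x := by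
    intro x hx
    have h1 : (1:ℝ) ≤ Real.exp x := Real.one_le_exp hx
    nlinarith [Real.exp_pos x]
  -- the function h = p e^x/(q+pe^x) - p - x/4 is antitone on [0,∞)
  set h : ℝ → ℝ := fun x => p * Real.exp x / ((1-p) + p * Real.exp x) - p - x / 4 with hh
  have hder : ∀ x ∈ Ici (0:ℝ), HasDerivAt h
      (p * (1-p) * Real.exp x / ((1-p) + p * Real.exp x) ^ 2 - 1 / 4) x := by
    intro x hx
    have hx0 : (0:ℝ) ≤ x := hx
    have hv : HasDerivAt (fun x => (1-p) + p * Real.exp x) (p * Real.exp x) x := by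
      simpa using ((Real.hasDerivAt_exp x).const_mul p).const_add ((1:ℝ)-p)
    have hu : HasDerivAt (fun x => p * Real.exp x) (p * Real.exp x) x :=
      (Real.hasDerivAt_exp x).const_mul p
    have hvne : (1-p) + p * Real.exp x ≠ 0 := ne_of_gt (hpos x hx0)
    have := (hu.div hv hvne)
    have heq : (p * Real.exp x * ((1-p) + p * Real.exp x) - p * Real.exp x * (p * Real.exp x)) /
        ((1-p) + p * Real.exp x) ^ 2 = p * (1-p) * Real.exp x / ((1-p) + p * Real.exp x) ^ 2 := by
      ring
    rw [heq] at this
    exact ((this.sub_const p).sub ((hasDerivAt_id x).div_const 4)).congr_deriv (by ring)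
  have hanti : AntitoneOn h (Ici (0:ℝ)) := by
    apply antitoneOn_of_deriv_nonpos (convex_Ici 0)
    · exact fun x hx => (hder x hx).continuousAt.continuousWithinAt
    · intro x hx
      exact ((hder x (interior_subset hx)).differentiableAt).differentiableWithinAt
    · intro x hx
      rw [interior_Ici] at hx
      rw [(hder x (Set.mem_Ici.mpr (le_of_lt (Set.mem_Ioi.mp hx)))).deriv]
      have hx0 : (0:ℝ) ≤ x := le_of_lt hx
      have h4 : 4 * (p * (1-p) * Real.exp x) ≤ ((1-p) + p * Real.exp x) ^ 2 := by
        nlinarith [sq_nonneg ((1-p) - p * Real.exp x), Real.exp_pos x]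
      have hsq : (0:ℝ) < ((1-p) + p * Real.exp x) ^ 2 := pow_pos (hpos x hx0) 2
      rw [sub_nonpos, div_le_iff₀ hsq]
      linarith
  have hh0 : h 0 = 0 := by simp [hh]
  have hhle : ∀ x ∈ Ici (0:ℝ), h x ≤ 0 := by
    intro x hx
    rw [← hh0]; exact hanti (le_refl (0:ℝ)) hx hx
  -- now F x = log (q + p e^x) - p x - x²/8 is antitone with F 0 = 0
  set F : ℝ → ℝ := fun x => Real.log ((1-p) + p * Real.exp x) - p * x - x ^ 2 / 8 with hF
  have hFder : ∀ x ∈ Ici (0:ℝ), HasDerivAt F (h x) x := by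
    intro x hx
    have hx0 : (0:ℝ) ≤ x := hx
    have hv : HasDerivAt (fun x => (1-p) + p * Real.exp x) (p * Real.exp x) x := by
      simpa using ((Real.hasDerivAt_exp x).const_mul p).const_add ((1:ℝ)-p)
    have hvne : (1-p) + p * Real.exp x ≠ 0 := ne_of_gt (hpos x hx0)
    have hlog : HasDerivAt (fun x => Real.log ((1-p) + p * Real.exp x))
        (p * Real.exp x / ((1-p) + p * Real.exp x)) x := hv.log hvne
    have h2 : HasDerivAt (fun x => p * x) p x := by
      simpa using (hasDerivAt_id x).const_mul p
    have h3 : HasDerivAt (fun x => x ^ 2 / 8) (2 * x / 8) x := by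
      simpa using ((hasDerivAt_pow 2 x).div_const 8)
    have := (hlog.sub h2).sub h3
    exact this.congr_deriv (by show _ = p * Real.exp x / ((1-p) + p * Real.exp x) - p - x / 4; ring)
  have hFanti : AntitoneOn F (Ici (0:ℝ)) := by
    apply antitoneOn_of_deriv_nonpos (convex_Ici 0)
    · exact fun x hx => (hFder x hx).continuousAt.continuousWithinAt
    · intro x hx
      exact ((hFder x (interior_subset hx)).differentiableAt).differentiableWithinAt
    · intro x hx
      rw [interior_Ici] at hx
      rw [(hFder x (Set.mem_Ici.mpr (le_of_lt (Set.mem_Ioi.mp hx)))).deriv]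
      exact hhle x (Set.mem_Ici.mpr (le_of_lt (Set.mem_Ioi.mp hx)))
  have hF0 : F 0 = 0 := by simp [hF]
  have hFle : F s ≤ 0 := by rw [← hF0]; exact hFanti (le_refl (0:ℝ)) hs hs
  have hlog : Real.log ((1-p) + p * Real.exp s) ≤ p * s + s ^ 2 / 8 := by
    have := hFle; simp only [hF] at this; linarith
  calc (1-p) + p * Real.exp s = Real.exp (Real.log ((1-p) + p * Real.exp s)) :=
        (Real.exp_log (hpos s hs)).symm
    _ ≤ Real.exp (p * s + s ^ 2 / 8) := Real.exp_le_exp.mpr hlog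

-- AM-GM step: x^(m-1) * z ≤ (((m-1)*x + z)/m)^m
lemma amgm_step (m : ℕ) (hm : 1 ≤ m) {x z : ℝ} (hx : 0 ≤ x) (hz : 0 ≤ z) :
    x ^ (m - 1) * z ≤ ((((m:ℝ) - 1) * x + z) / m) ^ m := by
  have hm0 : (0:ℝ) < m := by exact_mod_cast hm
  have hw1 : (0:ℝ) ≤ ((m:ℝ)-1)/m := by
    apply div_nonneg _ (le_of_lt hm0)
    have : (1:ℝ) ≤ m := by exact_mod_cast hm
    linarith
  have hw2 : (0:ℝ) ≤ 1/(m:ℝ) := by positivity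
  have hsum : ((m:ℝ)-1)/m + 1/m = 1 := by field_simp; ring
  have key := Real.geom_mean_le_arith_mean2_weighted hw1 hw2 hx hz hsum
  -- key : x ^ (((m:ℝ)-1)/m) * z ^ (1/(m:ℝ)) ≤ ((m:ℝ)-1)/m * x + 1/m * z
  have hLHS : (x ^ (((m:ℝ)-1)/m) * z ^ (1/(m:ℝ))) ^ (m:ℕ) = x ^ (m-1) * z := by
    rw [mul_pow, ← Real.rpow_natCast (x ^ (((m:ℝ)-1)/m)) m, ← Real.rpow_natCast (z ^ (1/(m:ℝ))) m,
      ← Real.rpow_mul hx, ← Real.rpow_mul hz]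
    rw [div_mul_cancel₀ _ (ne_of_gt hm0), one_div, inv_mul_cancel₀ (ne_of_gt hm0)]
    rw [Real.rpow_one]
    congr 1
    rw [show ((m:ℝ)-1) = ((m-1 : ℕ) : ℝ) by push_cast [Nat.cast_sub hm]; ring]
    exact Real.rpow_natCast x (m-1)
  calc x ^ (m-1) * z = (x ^ (((m:ℝ)-1)/m) * z ^ (1/(m:ℝ))) ^ (m:ℕ) := hLHS.symm
    _ ≤ (((m:ℝ)-1)/m * x + 1/m * z) ^ (m:ℕ) := by
        apply pow_le_pow_left₀ (by positivity) key
    _ = ((((m:ℝ) - 1) * x + z) / m) ^ m := by congr 1; field_simp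

-- combining inequality
lemma comb_ineq (N m : ℕ) (hN : 1 ≤ N) (hm : 1 ≤ m) {x lam : ℝ} (hx : 0 ≤ x) (hl : 0 ≤ lam) :
    (Nat.choose (N-1) m : ℝ) * x ^ m + lam * (Nat.choose (N-1) (m-1)) * x ^ (m-1)
      ≤ (Nat.choose N m) * ((((N:ℝ) - 1) * x + lam) / N) ^ m := by
  have hN0 : (0:ℝ) < N := by exact_mod_cast hN
  have hm0 : (0:ℝ) < m := by exact_mod_cast hm
  by_cases hmN : m ≤ N
  · have idB : N * Nat.choose (N-1) (m-1) = Nat.choose N m * m := by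
      have h := Nat.add_one_mul_choose_eq (N-1) (m-1)
      have e1 : N - 1 + 1 = N := by omega
      have e2 : m - 1 + 1 = m := by omega
      simp only [Nat.succ_eq_add_one, e1, e2] at h
      omega
    have idA : N * Nat.choose (N-1) m = Nat.choose N m * (N - m) := by
      have h1 := Nat.add_one_mul_choose_eq (N-1) m
      have e1 : N - 1 + 1 = N := by omega
      simp only [Nat.succ_eq_add_one, e1] at h1
      have h2 := Nat.choose_succ_right_eq N m
      omega
    set z : ℝ := (((N:ℝ) - m) * x + m * lam) / N with hzdef
    have hz : 0 ≤ z := by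
      apply div_nonneg _ (le_of_lt hN0)
      have : (m:ℝ) ≤ N := by exact_mod_cast hmN
      have h1 : 0 ≤ ((N:ℝ) - m) * x := mul_nonneg (by linarith) hx
      have h2 : 0 ≤ (m:ℝ) * lam := mul_nonneg (le_of_lt hm0) hl
      linarith
    have hNm : ((N - m : ℕ) : ℝ) = (N:ℝ) - m := by
      push_cast [Nat.cast_sub hmN]; ring
    have key : (Nat.choose N m : ℝ) * z
        = (Nat.choose (N-1) m : ℝ) * x + lam * (Nat.choose (N-1) (m-1)) := by
      rw [hzdef]
      rw [eq_div_iff (ne_of_gt hN0)] at *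
      have iA : (N:ℝ) * (Nat.choose (N-1) m : ℝ) = (Nat.choose N m : ℝ) * ((N:ℝ) - m) := by
        rw [← hNm]; exact_mod_cast idA
      have iB : (N:ℝ) * (Nat.choose (N-1) (m-1) : ℝ) = (Nat.choose N m : ℝ) * m := by
        exact_mod_cast idB
      field_simp
      nlinarith [iA, iB]
    have hxm : x ^ m = x ^ (m-1) * x := by
      rw [← pow_succ]; congr 1; omega
    have hy : (((m:ℝ) - 1) * x + z) / m = (((N:ℝ) - 1) * x + lam) / N := by
      rw [hzdef]; field_simp; ring
    calc (Nat.choose (N-1) m : ℝ) * x ^ m + lam * (Nat.choose (N-1) (m-1)) * x ^ (m-1)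
        = x ^ (m-1) * ((Nat.choose (N-1) m : ℝ) * x + lam * (Nat.choose (N-1) (m-1))) := by
          rw [hxm]; ring
      _ = (Nat.choose N m : ℝ) * (x ^ (m-1) * z) := by rw [← key]; ring
      _ ≤ (Nat.choose N m : ℝ) * ((((m:ℝ) - 1) * x + z) / m) ^ m := by
          apply mul_le_mul_of_nonneg_left (amgm_step m hm hx hz) (by positivity)
      _ = (Nat.choose N m : ℝ) * ((((N:ℝ) - 1) * x + lam) / N) ^ m := by rw [hy]
  · push_neg at hmN
    have h1 : Nat.choose (N-1) m = 0 := Nat.choose_eq_zero_of_lt (by omega)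
    have h2 : Nat.choose (N-1) (m-1) = 0 := Nat.choose_eq_zero_of_lt (by omega)
    have h3 : Nat.choose N m = 0 := Nat.choose_eq_zero_of_lt hmN
    simp [h1, h2, h3]

-- MGF bound for hypergeometric sampling
lemma mgf_bound {α : Type*} [DecidableEq α] {lam : ℝ} (hl : 0 ≤ lam) (K : ℕ) :
    ∀ (U D : Finset α), D ⊆ U → D.card = K → ∀ m : ℕ,
    (∑ S ∈ U.powersetCard m, lam ^ ((S ∩ D).card))
      ≤ (Nat.choose U.card m : ℝ) * (((U.card : ℝ) - K + K * lam) / U.card) ^ m := by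
  induction K with
  | zero =>
    intro U D hD hK m
    have hDe : D = ∅ := Finset.card_eq_zero.mp hK
    subst hDe
    simp only [Finset.inter_empty, Finset.card_empty, pow_zero, Finset.sum_const, nsmul_eq_mul,
      mul_one, Nat.cast_zero, zero_mul, add_zero, sub_zero]
    rw [Finset.card_powersetCard]
    rcases Nat.eq_zero_or_pos U.card with h0 | hpos
    · rcases Nat.eq_zero_or_pos m with hm0 | hmpos
      · simp [h0, hm0]
      · rw [Nat.choose_eq_zero_of_lt (by omega)]; simp
    · have : ((U.card : ℝ) / U.card) ^ m = 1 := by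
        rw [div_self (by positivity : (U.card:ℝ) ≠ 0), one_pow]
      rw [this, mul_one]
  | succ K ih =>
    intro U D hD hK m
    have hDne : D.Nonempty := Finset.card_pos.mp (by omega)
    obtain ⟨a, ha⟩ := hDne
    have haU : a ∈ U := hD ha
    have hN1 : 1 ≤ U.card := Finset.card_pos.mpr ⟨a, haU⟩
    set U' : Finset α := U.erase a with hU'
    set D' : Finset α := D.erase a with hD'
    have haU' : a ∉ U' := Finset.notMem_erase a U
    have hU'card : U'.card = U.card - 1 := Finset.card_erase_of_mem haU
    have hD'card : D'.card = K := by rw [hD', Finset.card_erase_of_mem ha, hK]; omega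
    have hD'U' : D' ⊆ U' := Finset.erase_subset_erase a hD
    have hKU' : K ≤ U'.card := hD'card ▸ Finset.card_le_card hD'U'
    have hUins : U = insert a U' := (Finset.insert_erase haU).symm
    rcases Nat.eq_zero_or_pos m with hm0 | hmpos
    · subst hm0
      simp [Finset.powersetCard_zero]
    · -- m ≥ 1
      obtain ⟨m', rfl⟩ : ∃ m', m = m' + 1 := ⟨m - 1, by omega⟩
      set x : ℝ := ((U'.card : ℝ) - K + K * lam) / U'.card with hxdef
      have hxnn : 0 ≤ x := by
        apply div_nonneg _ (Nat.cast_nonneg _)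
        have : (K:ℝ) ≤ U'.card := by exact_mod_cast hKU'
        have : 0 ≤ (K:ℝ) * lam := mul_nonneg (Nat.cast_nonneg _) hl
        linarith
      have hdisj : Disjoint (U'.powersetCard (m'+1)) ((U'.powersetCard m').image (insert a)) := by
        rw [Finset.disjoint_right]
        intro S hS hS'
        obtain ⟨T, hT, rfl⟩ := Finset.mem_image.mp hS
        have : insert a T ⊆ U' := (Finset.mem_powersetCard.mp hS').1
        exact haU' (this (Finset.mem_insert_self a T))
      have hinj : ∀ S ∈ U'.powersetCard m', ∀ T ∈ U'.powersetCard m',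
          insert a S = insert a T → S = T := by
        intro S hS T hT hST
        have haS : a ∉ S := fun h => haU' ((Finset.mem_powersetCard.mp hS).1 h)
        have haT : a ∉ T := fun h => haU' ((Finset.mem_powersetCard.mp hT).1 h)
        rw [← Finset.erase_insert haS, ← Finset.erase_insert haT, hST]
      rw [hUins, Finset.powersetCard_succ_insert haU', Finset.sum_union hdisj,
        Finset.sum_image hinj]
      have hsum1 : (∑ S ∈ U'.powersetCard (m'+1), lam ^ ((S ∩ D).card))
          ≤ (Nat.choose U'.card (m'+1) : ℝ) * x ^ (m'+1) := by
        have heq : ∀ S ∈ U'.powersetCard (m'+1), lam ^ ((S ∩ D).card) = lam ^ ((S ∩ D').card) := by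
          intro S hS
          have hSU' : S ⊆ U' := (Finset.mem_powersetCard.mp hS).1
          have : S ∩ D = S ∩ D' := by
            rw [hD']
            ext y
            simp only [Finset.mem_inter, Finset.mem_erase]
            constructor
            · rintro ⟨h1, h2⟩
              exact ⟨h1, ⟨fun hxa => haU' (hxa ▸ hSU' h1), h2⟩⟩
            · rintro ⟨h1, h2, h3⟩; exact ⟨h1, h3⟩
          rw [this]
        rw [Finset.sum_congr rfl heq]
        exact ih U' D' hD'U' hD'card (m'+1)
      have hsum2 : (∑ S ∈ U'.powersetCard m', lam ^ (((insert a S) ∩ D).card))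
          ≤ lam * ((Nat.choose U'.card m' : ℝ) * x ^ m') := by
        have heq : ∀ S ∈ U'.powersetCard m',
            lam ^ (((insert a S) ∩ D).card) = lam * lam ^ ((S ∩ D').card) := by
          intro S hS
          have hSU' : S ⊆ U' := (Finset.mem_powersetCard.mp hS).1
          have haS : a ∉ S := fun h => haU' (hSU' h)
          have hins : (insert a S) ∩ D = insert a (S ∩ D') := by
            rw [hD']
            ext y
            simp only [Finset.mem_inter, Finset.mem_insert, Finset.mem_erase]
            constructor
            · rintro ⟨h1 | h1, h2⟩
              · exact Or.inl h1
              · right; exact ⟨h1, fun hxa => haS (hxa ▸ h1), h2⟩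
            · rintro (rfl | ⟨h1, h2, h3⟩)
              · exact ⟨Or.inl rfl, ha⟩
              · exact ⟨Or.inr h1, h3⟩
          have hanotin : a ∉ S ∩ D' := by
            simp only [Finset.mem_inter]
            rintro ⟨h1, _⟩; exact haS h1
          rw [hins, Finset.card_insert_of_notMem hanotin, pow_succ]
          ring
        rw [Finset.sum_congr rfl heq, ← Finset.mul_sum]
        exact mul_le_mul_of_nonneg_left (ih U' D' hD'U' hD'card m') hl
      have hcomb := comb_ineq U.card (m'+1) hN1 (by omega) hxnn hl
      have hUc : ((insert a U').card) = U.card := by rw [← hUins]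
      rw [hUc]
      have hym : (((U.card:ℝ) - 1) * x + lam) / U.card
          = ((U.card : ℝ) - (K+1) + (K+1) * lam) / U.card := by
        congr 1
        rcases Nat.eq_zero_or_pos U'.card with h0 | hpos
        · -- U' empty forces K = 0
          have hK0 : K = 0 := by omega
          subst hK0
          have hx0 : x = 0 := by rw [hxdef, h0]; simp
          rw [hx0]
          have : (U.card : ℝ) = 1 := by
            have : U.card = 1 := by omega
            exact_mod_cast this
          rw [this]; push_cast; ring
        · have hU'R : (U'.card : ℝ) = (U.card : ℝ) - 1 := by
            have : (U'.card : ℝ) = ((U.card - 1 : ℕ) : ℝ) := by exact_mod_cast hU'card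
            rw [this, Nat.cast_sub hN1]; simp
          have hne : (U'.card : ℝ) ≠ 0 := Nat.cast_ne_zero.mpr hpos.ne'
          rw [hxdef, ← hU'R]
          field_simp
          linarith [hU'R]
      calc (∑ S ∈ U'.powersetCard (m'+1), lam ^ ((S ∩ D).card))
            + (∑ S ∈ U'.powersetCard m', lam ^ (((insert a S) ∩ D).card))
          ≤ (Nat.choose U'.card (m'+1) : ℝ) * x ^ (m'+1)
            + lam * ((Nat.choose U'.card m' : ℝ) * x ^ m') := add_le_add hsum1 hsum2
        _ = (Nat.choose (U.card - 1) (m'+1) : ℝ) * x ^ (m'+1)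
            + lam * (Nat.choose (U.card - 1) ((m'+1)-1) : ℝ) * x ^ ((m'+1)-1) := by
            rw [hU'card]; simp; ring
        _ ≤ (Nat.choose U.card (m'+1) : ℝ)
            * ((((U.card:ℝ) - 1) * x + lam) / U.card) ^ (m'+1) := hcomb
        _ = (Nat.choose U.card (m'+1) : ℝ)
            * (((U.card : ℝ) - (K+1) + (K+1) * lam) / U.card) ^ (m'+1) := by rw [hym]
        _ = (Nat.choose U.card (m'+1) : ℝ)
            * (((U.card : ℝ) - (↑(K+1)) + (↑(K+1)) * lam) / U.card) ^ (m'+1) := by push_cast; ring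

lemma tail_bound {α : Type*} [DecidableEq α] {U D : Finset α} (hD : D ⊆ U)
    (hU : 0 < U.card) (m : ℕ) (a : ℝ) {s : ℝ} (hs : 0 ≤ s) :
    (((U.powersetCard m).filter (fun S => a < ((S ∩ D).card : ℝ))).card : ℝ)
      ≤ (Nat.choose U.card m : ℝ)
        * Real.exp (m * (((D.card : ℝ)/U.card) * s + s ^ 2 / 8) - s * a) := by
  set p : ℝ := (D.card : ℝ)/U.card with hp
  have hp0 : 0 ≤ p := by positivity
  have hp1 : p ≤ 1 := by
    rw [hp, div_le_one (by exact_mod_cast hU)]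
    exact_mod_cast Finset.card_le_card hD
  have step1 : (((U.powersetCard m).filter (fun S => a < ((S ∩ D).card : ℝ))).card : ℝ)
      ≤ ∑ S ∈ U.powersetCard m, Real.exp (s * (((S ∩ D).card : ℝ) - a)) := by
    have e0 : (((U.powersetCard m).filter (fun S => a < ((S ∩ D).card : ℝ))).card : ℝ)
        = ∑ S ∈ (U.powersetCard m).filter (fun S => a < ((S ∩ D).card : ℝ)), (1:ℝ) := by simp
    rw [e0]
    calc (∑ S ∈ (U.powersetCard m).filter (fun S => a < ((S ∩ D).card : ℝ)), (1:ℝ))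
        ≤ ∑ S ∈ (U.powersetCard m).filter (fun S => a < ((S ∩ D).card : ℝ)),
            Real.exp (s * (((S ∩ D).card : ℝ) - a)) := by
          apply Finset.sum_le_sum
          intro S hS
          have h := (Finset.mem_filter.mp hS).2
          have h2 : 0 ≤ s * (((S ∩ D).card : ℝ) - a) := mul_nonneg hs (by linarith)
          simpa using Real.exp_le_exp.mpr h2
      _ ≤ ∑ S ∈ U.powersetCard m, Real.exp (s * (((S ∩ D).card : ℝ) - a)) := by
          apply Finset.sum_le_sum_of_subset_of_nonneg (Finset.filter_subset _ _)
          intro S _ _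
          exact (Real.exp_pos _).le
  have step2 : (∑ S ∈ U.powersetCard m, Real.exp (s * (((S ∩ D).card : ℝ) - a)))
      = Real.exp (-(s*a)) * ∑ S ∈ U.powersetCard m, (Real.exp s) ^ ((S ∩ D).card) := by
    rw [Finset.mul_sum]
    apply Finset.sum_congr rfl
    intro S _
    rw [← Real.exp_nat_mul, ← Real.exp_add]
    congr 1
    ring
  have step3 := mgf_bound (Real.exp_nonneg s) D.card U D hD rfl m
  have step4 : (((U.card : ℝ) - D.card + D.card * Real.exp s) / U.card) ^ m
      ≤ Real.exp (m * (p * s + s ^ 2 / 8)) := by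
    have hbase : ((U.card : ℝ) - D.card + D.card * Real.exp s) / U.card
        = (1 - p) + p * Real.exp s := by
      rw [hp]; field_simp
    rw [hbase]
    calc ((1 - p) + p * Real.exp s) ^ m ≤ (Real.exp (p * s + s ^ 2 / 8)) ^ m := by
          apply pow_le_pow_left₀ _ (bern_aux p hp0 hp1 hs)
          have h1 : (1:ℝ) ≤ Real.exp s := Real.one_le_exp hs
          nlinarith
      _ = Real.exp (m * (p * s + s ^ 2 / 8)) := by
          rw [← Real.exp_nat_mul]
  calc (((U.powersetCard m).filter (fun S => a < ((S ∩ D).card : ℝ))).card : ℝ)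
      ≤ Real.exp (-(s*a)) * ∑ S ∈ U.powersetCard m, (Real.exp s) ^ ((S ∩ D).card) := by
        rw [← step2]; exact step1
    _ ≤ Real.exp (-(s*a)) * ((Nat.choose U.card m : ℝ)
        * (((U.card : ℝ) - D.card + D.card * Real.exp s) / U.card) ^ m) := by
        apply mul_le_mul_of_nonneg_left step3 (Real.exp_pos _).le
    _ ≤ Real.exp (-(s*a)) * ((Nat.choose U.card m : ℝ) * Real.exp (m * (p * s + s ^ 2 / 8))) := by
        apply mul_le_mul_of_nonneg_left _ (Real.exp_pos _).le
        exact mul_le_mul_of_nonneg_left step4 (Nat.cast_nonneg _)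
    _ = (Nat.choose U.card m : ℝ) * Real.exp (m * (p * s + s ^ 2 / 8) - s * a) := by
        rw [Real.exp_sub, Real.exp_neg]
        field_simp

lemma sqrt_le_of_sq {x y : ℝ} (hy : 0 ≤ y) (h : x ≤ y^2) : Real.sqrt x ≤ y := by
  calc Real.sqrt x ≤ Real.sqrt (y^2) := Real.sqrt_le_sqrt h
    _ = y := by rw [Real.sqrt_sq hy]

lemma logb23_lb : (19:ℝ)/12 < Real.logb 2 3 := by
  have h : Real.logb 2 (2^19 : ℝ) < Real.logb 2 (3^12 : ℝ) := by
    apply Real.logb_lt_logb (by norm_num) (by positivity)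
    norm_num
  rw [Real.logb_pow, Real.logb_pow, Real.logb_self_eq_one (by norm_num)] at h
  push_cast at h
  linarith

lemma logb23_ub : Real.logb 2 3 < (27:ℝ)/17 := by
  have h : Real.logb 2 (3^17 : ℝ) < Real.logb 2 (2^27 : ℝ) := by
    apply Real.logb_lt_logb (by norm_num) (by positivity)
    norm_num
  rw [Real.logb_pow, Real.logb_pow, Real.logb_self_eq_one (by norm_num)] at h
  push_cast at h
  linarith

lemma numeric_core (k n : ℕ) (hk : 2 ≤ k) (hn : k ≤ n) :
    2 * (Real.sqrt ((k:ℝ) * Real.logb 2 k) - ((k:ℝ)-1)/n)^2 / ((k:ℝ)-1) + ((k:ℝ)-1)/n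
      ≥ 2 * Real.log k := by
  have hk2 : (2:ℝ) ≤ k := by exact_mod_cast hk
  have hkn : (k:ℝ) ≤ n := by exact_mod_cast hn
  have hk0 : (0:ℝ) < k := by linarith
  have hn0 : (0:ℝ) < n := by linarith
  set r : ℝ := Real.logb 2 k with hrdef
  have hr1 : 1 ≤ r := by
    rw [hrdef, show (1:ℝ) = Real.logb 2 2 from (Real.logb_self_eq_one (by norm_num)).symm]
    exact (Real.logb_le_logb (by norm_num) (by norm_num) (by linarith)).mpr hk2
  have hr0 : 0 ≤ (k:ℝ) * r := by positivity
  set t : ℝ := Real.sqrt ((k:ℝ) * r) with htdef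
  have ht0 : 0 ≤ t := Real.sqrt_nonneg _
  have ht2 : t^2 = (k:ℝ) * r := Real.sq_sqrt hr0
  set m : ℝ := (k:ℝ) - 1 with hmdef
  have hm1 : 1 ≤ m := by linarith
  have hm0 : 0 < m := by linarith
  have hL : Real.log k = r * Real.log 2 := by
    rw [hrdef, Real.logb, div_mul_cancel₀]
    exact ne_of_gt (Real.log_pos (by norm_num))
  have hlog2ub : Real.log 2 < 0.6932 := by
    have := Real.log_two_lt_d9; linarith
  have hlog2lb : (0.6931:ℝ) < Real.log 2 := by
    have := Real.log_two_gt_d9; linarith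
  have hmne : m ≠ 0 := ne_of_gt hm0
  have hnne : (n:ℝ) ≠ 0 := ne_of_gt hn0
  have hexp : 2 * (t - m/n)^2 / m = 2*t^2/m - 4*t/n + 2*m/n^2 := by
    field_simp
    ring
  have h2mn : 0 ≤ 2*m/n^2 := by positivity
  -- suffices: 2t²/m - 4t/n + m/n ≥ 2 log k
  rw [hexp]
  have key : 2*t^2/m - 4*t/n + m/n ≥ 2 * Real.log k := by
    rw [hL]
    by_cases hcase : 4*t ≤ m
    · -- case A
      have hA1 : 0 ≤ (m - 4*t)/n := div_nonneg (by linarith) (le_of_lt hn0)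
      have hA2 : 2*t^2/m ≥ 2*(r*Real.log 2) := by
        rw [ge_iff_le, le_div_iff₀ hm0, ht2]
        have hr0' : 0 ≤ r := by linarith
        have : m * Real.log 2 ≤ (k:ℝ) := by nlinarith
        nlinarith
      have : 2*t^2/m - 4*t/n + m/n = 2*t^2/m + (m - 4*t)/n := by field_simp; ring
      rw [this]
      linarith
    · -- case B : m < 4t
      push_neg at hcase
      have hB0 : (m - 4*t)/k ≤ (m - 4*t)/n := by
        rw [div_eq_mul_inv, div_eq_mul_inv, ← one_div, ← one_div]
        apply mul_le_mul_of_nonpos_left _ (by linarith : m - 4*t ≤ 0)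
        exact one_div_le_one_div_of_le hk0 hkn
      have hmain : ((k:ℝ) - m * Real.log 2) * t^2 - 2*m*t + m^2/2 ≥ 0 := by
        by_cases hk5 : 5 ≤ k
        · have hk5' : (5:ℝ) ≤ k := by exact_mod_cast hk5
          have hmul : m*Real.log 2 ≤ m*0.6932 :=
            mul_le_mul_of_nonneg_left (le_of_lt hlog2ub) (le_of_lt hm0)
          have hc2 : 2 ≤ (k:ℝ) - m*Real.log 2 := by
            rw [hmdef] at hmul ⊢
            linarith
          obtain ⟨cc, hccdef⟩ : ∃ cc:ℝ, cc = (k:ℝ) - m*Real.log 2 := ⟨_, rfl⟩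
          rw [← hccdef] at hc2 ⊢
          have hccpos : (0:ℝ) < cc := by linarith
          clear_value t m
          clear hccdef
          have hq : 0 ≤ cc * (cc*t^2 - 2*m*t + m^2/2) := by
            nlinarith [sq_nonneg (cc*t - m), mul_nonneg (sub_nonneg.mpr hc2) (sq_nonneg m)]
          have hdiv : 0 ≤ (cc * (cc*t^2 - 2*m*t + m^2/2))/cc := div_nonneg hq (le_of_lt hccpos)
          rw [mul_div_cancel_left₀ _ (ne_of_gt hccpos)] at hdiv
          linarith
        · push_neg at hk5
          interval_cases k
          · -- k = 2
            have hr : r = 1 := by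
              rw [hrdef, show ((2:ℕ):ℝ) = 2 by norm_num, Real.logb_self_eq_one (by norm_num)]
            have ht2' : t^2 = 2 := by rw [ht2, hr]; norm_num
            have htub : t ≤ 1.4143 := by nlinarith
            have hm' : m = 1 := by rw [hmdef]; norm_num
            rw [hm', ht2']
            push_cast
            nlinarith
          · -- k = 3
            have hrl : (19:ℝ)/12 < r := by
              rw [hrdef]; exact_mod_cast logb23_lb
            have hru : r < (27:ℝ)/17 := by
              rw [hrdef]; exact_mod_cast logb23_ub
            have ht2' : t^2 = 3*r := by rw [ht2]; norm_num
            have htub : t ≤ 2.18283 := by nlinarith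
            have hm' : m = 2 := by rw [hmdef]; norm_num
            have hr0' : (0:ℝ) < r := by linarith
            have hrlog : r * Real.log 2 ≤ 1.101 := by nlinarith
            rw [hm', ht2']
            push_cast
            nlinarith [hrlog, hrl, htub, hlog2ub, hlog2lb]
          · -- k = 4
            have hr : r = 2 := by
              rw [hrdef, show ((4:ℕ):ℝ) = 2^(2:ℕ) by norm_num, Real.logb_pow,
                Real.logb_self_eq_one (by norm_num)]
              norm_num
            have ht2' : t^2 = 8 := by rw [ht2, hr]; norm_num
            have htub : t ≤ 2.82843 := by nlinarith
            have hm' : m = 3 := by rw [hmdef]; norm_num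
            rw [hm', ht2']
            push_cast
            nlinarith
      have heq : 2*t^2/m - 2*(r*Real.log 2) + (m - 4*t)/k
          = (2/((k:ℝ)*m)) * (((k:ℝ) - m*Real.log 2)*t^2 - 2*m*t + m^2/2) := by
        have hkne : (k:ℝ) ≠ 0 := ne_of_gt hk0
        rw [ht2]
        field_simp
        ring
      have hfin : 2*t^2/m - 2*(r*Real.log 2) + (m - 4*t)/k ≥ 0 := by
        rw [heq]
        apply mul_nonneg (by positivity) hmain
      have : 2*t^2/m - 4*t/n + m/n = 2*t^2/m + (m - 4*t)/n := by field_simp; ring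
      rw [this]
      linarith
  linarith

lemma numeric_final (k n : ℕ) (hk : 2 ≤ k) (hn : k ≤ n) :
    Real.exp (-(2 * (Real.sqrt ((k:ℝ) * Real.logb 2 k) - ((k:ℝ)-1)/n)^2 / ((k:ℝ)-1)))
      ≤ 1/(k:ℝ)^2 * ((n:ℝ)/((n:ℝ)-1))^(k-1) := by
  have hk2 : (2:ℝ) ≤ k := by exact_mod_cast hk
  have hkn : (k:ℝ) ≤ n := by exact_mod_cast hn
  have hk0 : (0:ℝ) < k := by linarith
  have hn2 : (2:ℝ) ≤ n := by linarith
  have hn0 : (0:ℝ) < n := by linarith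
  have hn1 : (0:ℝ) < (n:ℝ) - 1 := by linarith
  have hmcast : ((k - 1 : ℕ) : ℝ) = (k:ℝ) - 1 := by
    rw [Nat.cast_sub (by omega)]; simp
  have hlogn : 1/(n:ℝ) ≤ Real.log ((n:ℝ)/((n:ℝ)-1)) := by
    have h1 : Real.log (((n:ℝ)-1)/n) ≤ ((n:ℝ)-1)/n - 1 :=
      Real.log_le_sub_one_of_pos (by positivity)
    have h2 : Real.log (((n:ℝ)-1)/n) = - Real.log ((n:ℝ)/((n:ℝ)-1)) := by
      rw [← Real.log_inv]
      congr 1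
      field_simp
    have h3 : ((n:ℝ)-1)/n - 1 = -(1/n) := by field_simp; ring
    rw [h2, h3] at h1
    linarith
  have hstep1 : Real.exp (-(2 * (Real.sqrt ((k:ℝ) * Real.logb 2 k) - ((k:ℝ)-1)/n)^2 / ((k:ℝ)-1)))
      ≤ Real.exp (-2*Real.log k + ((k:ℝ)-1)/n) := by
    apply Real.exp_le_exp.mpr
    have := numeric_core k n hk hn
    linarith
  have hstep2 : Real.exp (-2*Real.log k + ((k:ℝ)-1)/n)
      = 1/(k:ℝ)^2 * Real.exp (((k:ℝ)-1)/n) := by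
    rw [Real.exp_add]
    congr 1
    rw [show -2*Real.log k = -(Real.log k + Real.log k) by ring, Real.exp_neg, Real.exp_add,
      Real.exp_log hk0]
    field_simp
  have hstep3 : Real.exp (((k:ℝ)-1)/n) ≤ ((n:ℝ)/((n:ℝ)-1))^(k-1) := by
    have h1 : ((k:ℝ)-1)/n ≤ ((k:ℝ)-1) * Real.log ((n:ℝ)/((n:ℝ)-1)) := by
      have hm0 : (0:ℝ) ≤ (k:ℝ)-1 := by linarith
      calc ((k:ℝ)-1)/n = ((k:ℝ)-1) * (1/n) := by ring
        _ ≤ ((k:ℝ)-1) * Real.log ((n:ℝ)/((n:ℝ)-1)) := mul_le_mul_of_nonneg_left hlogn hm0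
    calc Real.exp (((k:ℝ)-1)/n) ≤ Real.exp (((k:ℝ)-1) * Real.log ((n:ℝ)/((n:ℝ)-1))) :=
          Real.exp_le_exp.mpr h1
      _ = ((n:ℝ)/((n:ℝ)-1))^(k-1) := by
          rw [← hmcast, Real.exp_nat_mul, Real.exp_log (by positivity)]
  calc Real.exp (-(2 * (Real.sqrt ((k:ℝ) * Real.logb 2 k) - ((k:ℝ)-1)/n)^2 / ((k:ℝ)-1)))
      ≤ 1/(k:ℝ)^2 * Real.exp (((k:ℝ)-1)/n) := by rw [← hstep2]; exact hstep1
    _ ≤ 1/(k:ℝ)^2 * ((n:ℝ)/((n:ℝ)-1))^(k-1) := by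
        apply mul_le_mul_of_nonneg_left hstep3 (by positivity)

lemma two_tails {α : Type*} [DecidableEq α] (U D : Finset α) (hD : D ⊆ U)
    (k n : ℕ) (hk : 2 ≤ k) (hn : k ≤ n) (hU : U.card = n - 1) :
    (((U.powersetCard (k-1)).filter (fun S =>
        Real.sqrt ((k:ℝ) * Real.logb 2 k) <
          |((S ∩ D).card : ℝ) - ((k:ℝ)-1) * (D.card:ℝ) / n|)).card : ℝ)
      ≤ 2 * (Nat.choose (n-1) (k-1) : ℝ)
        * Real.exp (-(2 * (Real.sqrt ((k:ℝ) * Real.logb 2 k) - ((k:ℝ)-1)/n)^2 / ((k:ℝ)-1))) := by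
  have hk2 : (2:ℝ) ≤ k := by exact_mod_cast hk
  have hkn : (k:ℝ) ≤ n := by exact_mod_cast hn
  have hn0 : (0:ℝ) < n := by linarith
  have hn2 : (2:ℝ) ≤ n := by linarith
  set r : ℝ := Real.logb 2 k with hrdef
  have hr1 : 1 ≤ r := by
    rw [hrdef, show (1:ℝ) = Real.logb 2 2 from (Real.logb_self_eq_one (by norm_num)).symm]
    exact (Real.logb_le_logb (by norm_num) (by norm_num) (by linarith)).mpr hk2
  set t : ℝ := Real.sqrt ((k:ℝ) * r) with htdef
  have ht0 : 0 ≤ t := Real.sqrt_nonneg _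
  have ht2 : t^2 = (k:ℝ) * r := Real.sq_sqrt (by positivity)
  have ht1 : 1 ≤ t := by nlinarith
  set mR : ℝ := (k:ℝ) - 1 with hmRdef
  have hmR1 : 1 ≤ mR := by rw [hmRdef]; linarith
  have hmR0 : 0 < mR := by linarith
  have hmcast : ((k - 1 : ℕ) : ℝ) = mR := by
    rw [Nat.cast_sub (by omega)]; simp [hmRdef]
  have hNcast : ((n - 1 : ℕ) : ℝ) = (n:ℝ) - 1 := by
    rw [Nat.cast_sub (by omega)]; simp
  have hcardD : D.card ≤ n - 1 := by
    have := Finset.card_le_card hD; omega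
  have hUpos : 0 < U.card := by omega
  have hnne : (n:ℝ) ≠ 0 := by linarith
  have hn1ne : (n:ℝ) - 1 ≠ 0 := by linarith
  set τ : ℝ := t - mR/n with hτdef
  have hτ0 : 0 < τ := by
    rw [hτdef]
    have h1 : mR/n < 1 := by
      rw [div_lt_one hn0, hmRdef]; linarith
    linarith
  have hτt : τ ≤ t := by
    rw [hτdef]
    have : 0 ≤ mR/n := by positivity
    linarith
  set s : ℝ := 4*τ/mR with hsdef
  have hs0 : 0 ≤ s := by positivity
  set μ : ℝ := ((k:ℝ)-1) * (D.card:ℝ) / n with hμdef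
  set dv : ℝ := (D.card : ℝ) with hdvdef
  have hdv0 : 0 ≤ dv := by positivity
  have hdvN : dv ≤ (n:ℝ) - 1 := by
    rw [hdvdef, ← hNcast]
    exact_mod_cast hcardD
  clear_value r t mR τ s μ dv
  -- exponent algebra shared
  have hms : mR * s^2/8 = 2*τ^2/mR := by
    rw [hsdef]; field_simp; ring
  have hsτ : s * τ = 4*τ^2/mR := by
    rw [hsdef]; field_simp
  -- upper tail
  set B1 := (U.powersetCard (k-1)).filter (fun S => μ + t < ((S ∩ D).card : ℝ)) with hB1
  have hB1bound : (B1.card : ℝ)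
      ≤ (Nat.choose (n-1) (k-1) : ℝ) * Real.exp (-(2*τ^2/mR)) := by
    have h := tail_bound hD hUpos (k-1) (μ + t) hs0
    rw [hU] at h
    apply le_trans h
    apply mul_le_mul_of_nonneg_left _ (Nat.cast_nonneg _)
    apply Real.exp_le_exp.mpr
    rw [hmcast, hNcast, ← hdvdef]
    have hp1 : mR * (dv/((n:ℝ)-1)) - μ ≤ mR/n := by
      have e : mR * (dv/((n:ℝ)-1)) - μ = (mR*dv)/(((n:ℝ)-1)*n) := by
        rw [hμdef, hmRdef]
        field_simp
        ring
      rw [e, div_le_div_iff₀ (by nlinarith) hn0]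
      have h1 : mR*dv ≤ mR*((n:ℝ)-1) := mul_le_mul_of_nonneg_left hdvN (le_of_lt hmR0)
      have h2 : mR*dv*n ≤ mR*((n:ℝ)-1)*n := mul_le_mul_of_nonneg_right h1 (le_of_lt hn0)
      nlinarith [h2]
    calc mR * ((dv/((n:ℝ)-1)) * s + s^2/8) - s*(μ + t)
        = s * ((mR * (dv/((n:ℝ)-1)) - μ) - t) + mR * s^2/8 := by ring
      _ ≤ s * (mR/n - t) + mR * s^2/8 := by
          apply add_le_add _ le_rfl
          apply mul_le_mul_of_nonneg_left _ hs0
          linarith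
      _ = -(s*τ) + mR*s^2/8 := by rw [hτdef]; ring
      _ = -(2*τ^2/mR) := by rw [hsτ, hms]; ring
  -- lower tail (via complement)
  set D2 := U \ D with hD2
  have hD2sub : D2 ⊆ U := Finset.sdiff_subset
  have hd2card : (D2.card : ℝ) = ((n:ℝ)-1) - dv := by
    rw [hD2, Finset.card_sdiff_of_subset hD, hU, Nat.cast_sub hcardD, hNcast, hdvdef]
  set B2 := (U.powersetCard (k-1)).filter (fun S => (mR - μ + t) < ((S ∩ D2).card : ℝ)) with hB2
  have hB2bound : (B2.card : ℝ)
      ≤ (Nat.choose (n-1) (k-1) : ℝ) * Real.exp (-(2*τ^2/mR)) := by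
    have h := tail_bound hD2sub hUpos (k-1) (mR - μ + t) hs0
    rw [hU] at h
    apply le_trans h
    apply mul_le_mul_of_nonneg_left _ (Nat.cast_nonneg _)
    apply Real.exp_le_exp.mpr
    rw [hmcast, hNcast, hd2card]
    have hp2 : mR * ((((n:ℝ)-1) - dv)/((n:ℝ)-1)) ≤ mR - μ := by
      have e : mR * ((((n:ℝ)-1) - dv)/((n:ℝ)-1)) = mR - mR * (dv/((n:ℝ)-1)) := by
        field_simp
      rw [e, hμdef, hmRdef]
      have h2 : ((k:ℝ)-1) * (dv/n) ≤ ((k:ℝ)-1) * (dv/((n:ℝ)-1)) := by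
        apply mul_le_mul_of_nonneg_left _ (by linarith)
        apply div_le_div_of_nonneg_left hdv0 (by linarith) (by linarith)
      have e2 : ((k:ℝ)-1) * dv / n = ((k:ℝ)-1) * (dv/n) := by ring
      rw [e2]
      linarith
    calc mR * (((((n:ℝ)-1) - dv)/((n:ℝ)-1)) * s + s^2/8) - s*(mR - μ + t)
        = s * ((mR * ((((n:ℝ)-1) - dv)/((n:ℝ)-1)) - (mR - μ)) - t) + mR * s^2/8 := by ring
      _ ≤ s * (0 - t) + mR * s^2/8 := by
          apply add_le_add _ le_rfl
          apply mul_le_mul_of_nonneg_left _ hs0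
          linarith
      _ = -(s*t) + mR*s^2/8 := by ring
      _ ≤ -(s*τ) + mR*s^2/8 := by
          have h9 : s * τ ≤ s * t := mul_le_mul_of_nonneg_left hτt hs0
          linarith [h9]
      _ = -(2*τ^2/mR) := by rw [hsτ, hms]; ring
  -- split
  have hsplit : ((U.powersetCard (k-1)).filter (fun S =>
      t < |((S ∩ D).card : ℝ) - μ|)) ⊆ B1 ∪ B2 := by
    intro S hS
    obtain ⟨hS1, hS2⟩ := Finset.mem_filter.mp hS
    obtain ⟨hSU, hScard⟩ := Finset.mem_powersetCard.mp hS1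
    rw [Finset.mem_union, hB1, hB2, Finset.mem_filter, Finset.mem_filter]
    rcases lt_or_ge μ ((S ∩ D).card : ℝ) with hc | hc
    · left
      refine ⟨hS1, ?_⟩
      rw [abs_of_pos (by linarith)] at hS2
      linarith
    · right
      refine ⟨hS1, ?_⟩
      rw [abs_of_nonpos (by linarith)] at hS2
      have hcard2 : ((S ∩ D2).card : ℝ) = mR - ((S ∩ D).card : ℝ) := by
        have e1 : S ∩ D2 = S \ D := by
          rw [hD2]
          ext x
          simp only [Finset.mem_inter, Finset.mem_sdiff]
          exact ⟨fun ⟨h1, _, h3⟩ => ⟨h1, h3⟩, fun ⟨h1, h2⟩ => ⟨h1, hSU h1, h2⟩⟩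
        have e2 := Finset.card_sdiff_add_card_inter S D
        rw [e1]
        have : (S \ D).card = (k-1) - (S ∩ D).card := by omega
        rw [this, Nat.cast_sub (by omega), hmcast]
      rw [hcard2]
      linarith
  calc (((U.powersetCard (k-1)).filter (fun S => t < |((S ∩ D).card : ℝ) - μ|)).card : ℝ)
      ≤ ((B1 ∪ B2).card : ℝ) := by exact_mod_cast Finset.card_le_card hsplit
    _ ≤ (B1.card : ℝ) + (B2.card : ℝ) := by exact_mod_cast Finset.card_union_le B1 B2
    _ ≤ 2 * (Nat.choose (n-1) (k-1) : ℝ) * Real.exp (-(2*τ^2/mR)) := by linarith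

end Aux

section Main
open Finset

/-- Theorem: let `k ≥ 2` be an integer and `G` a simple graph on `n ≥ k` vertices. Then the
number of `k`-element vertex subsets `A` containing a vertex `v` with
`|deg_A(v) - (k-1)·deg_G(v)/n| > √(k·log k)` (logarithm to base 2) is at most
`(2/k)·n^k/k!`. -/
theorem stmt_19 (k : ℕ) (hk : 2 ≤ k) (n : ℕ) (hn : k ≤ n) (G : SimpleGraph (Fin n)) :
    ({A : Finset (Fin n) | A.card = k ∧ ∃ v ∈ A,
        Real.sqrt ((k : ℝ) * Real.logb 2 (k : ℝ)) <
          |(graphDegIn G A v : ℝ) - ((k : ℝ) - 1) * (graphDeg G v : ℝ) / (n : ℝ)|}.ncard : ℝ)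
      ≤ 2 / (k : ℝ) * (n : ℝ) ^ k / (k.factorial : ℝ) := by
  have hk2 : (2:ℝ) ≤ k := by exact_mod_cast hk
  have hkn : (k:ℝ) ≤ n := by exact_mod_cast hn
  have hn0 : (0:ℝ) < n := by linarith
  have hn1 : (0:ℝ) < (n:ℝ) - 1 := by linarith
  have hk0 : (0:ℝ) < k := by linarith
  set t : ℝ := Real.sqrt ((k : ℝ) * Real.logb 2 (k : ℝ)) with htdef
  set F : Finset (Finset (Fin n)) := univ.filter (fun A => A.card = k ∧ ∃ v ∈ A,
    t < |(graphDegIn G A v : ℝ) - ((k : ℝ) - 1) * (graphDeg G v : ℝ) / (n : ℝ)|) with hFdef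
  have hset : {A : Finset (Fin n) | A.card = k ∧ ∃ v ∈ A,
      t < |(graphDegIn G A v : ℝ) - ((k : ℝ) - 1) * (graphDeg G v : ℝ) / (n : ℝ)|} = ↑F := by
    rw [hFdef]
    ext A
    simp
  rw [hset, Set.ncard_coe_finset]
  -- the per-vertex pieces
  set Fv : Fin n → Finset (Finset (Fin n)) := fun v => univ.filter (fun A => A.card = k ∧ v ∈ A ∧
    t < |(graphDegIn G A v : ℝ) - ((k : ℝ) - 1) * (graphDeg G v : ℝ) / (n : ℝ)|) with hFvdef
  have hFsub : F ⊆ univ.biUnion Fv := by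
    intro A hA
    rw [hFdef, Finset.mem_filter] at hA
    obtain ⟨-, hcard, v, hv, hcond⟩ := hA
    apply Finset.mem_biUnion.mpr
    exact ⟨v, Finset.mem_univ v, Finset.mem_filter.mpr ⟨Finset.mem_univ A, hcard, hv, hcond⟩⟩
  have hcount : F.card ≤ ∑ v : Fin n, (Fv v).card :=
    le_trans (Finset.card_le_card hFsub) (Finset.card_biUnion_le)
  -- per vertex bound
  have hper : ∀ v : Fin n, ((Fv v).card : ℝ)
      ≤ 2 * (Nat.choose (n-1) (k-1) : ℝ)
        * Real.exp (-(2 * (t - ((k:ℝ)-1)/n)^2 / ((k:ℝ)-1))) := by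
    intro v
    set Dv : Finset (Fin n) := univ.filter (fun u => G.Adj v u) with hDvdef
    have hdeg : graphDeg G v = Dv.card := rfl
    have hDsub : Dv ⊆ univ.erase v := by
      intro u hu
      rw [hDvdef, Finset.mem_filter] at hu
      exact Finset.mem_erase.mpr ⟨(hu.2.ne).symm, Finset.mem_univ u⟩
    have hUcard : (univ.erase v).card = n - 1 := by
      rw [Finset.card_erase_of_mem (Finset.mem_univ v), Finset.card_univ, Fintype.card_fin]
    set Bv : Finset (Finset (Fin n)) := (((univ.erase v)).powersetCard (k-1)).filter (fun S =>
      t < |((S ∩ Dv).card : ℝ) - ((k:ℝ)-1) * (Dv.card:ℝ) / n|) with hBvdef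
    have hinj : (Fv v).card ≤ Bv.card := by
      apply Finset.card_le_card_of_injOn (fun A => A.erase v)
      · intro A hA
        have hA : A ∈ Fv v := hA
        rw [hFvdef, Finset.mem_filter] at hA
        obtain ⟨-, hcard, hvA, hcond⟩ := hA
        show A.erase v ∈ Bv
        rw [hBvdef, Finset.mem_filter]
        constructor
        · apply Finset.mem_powersetCard.mpr
          refine ⟨Finset.erase_subset_erase v (Finset.subset_univ A), ?_⟩
          rw [Finset.card_erase_of_mem hvA, hcard]
        · have hkey : A.erase v ∩ Dv = A.filter (fun u => G.Adj v u) := by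
            ext x
            rw [hDvdef]
            simp only [Finset.mem_inter, Finset.mem_erase, Finset.mem_filter, Finset.mem_univ,
              true_and]
            constructor
            · rintro ⟨⟨-, hxA⟩, hadj⟩
              exact ⟨hxA, hadj⟩
            · rintro ⟨hxA, hadj⟩
              exact ⟨⟨hadj.ne.symm, hxA⟩, hadj⟩
          have : ((A.erase v ∩ Dv).card : ℝ) = (graphDegIn G A v : ℝ) := by
            rw [hkey]; rfl
          rw [this, ← hdeg]
          exact hcond
      · intro A hA B hB hAB
        rw [hFvdef, Finset.coe_filter] at hA hB
        simp only [Set.mem_setOf_eq] at hA hB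
        have h1 : insert v (A.erase v) = A := Finset.insert_erase hA.2.2.1
        have h2 : insert v (B.erase v) = B := Finset.insert_erase hB.2.2.1
        rw [← h1, ← h2]
        simp only at hAB
        rw [hAB]
    calc ((Fv v).card : ℝ) ≤ (Bv.card : ℝ) := by exact_mod_cast hinj
      _ ≤ 2 * (Nat.choose (n-1) (k-1) : ℝ)
          * Real.exp (-(2 * (t - ((k:ℝ)-1)/n)^2 / ((k:ℝ)-1))) := by
        rw [hBvdef, htdef]
        exact two_tails (univ.erase v) Dv hDsub k n hk hn hUcard
  -- sum up
  have htotal : (F.card : ℝ) ≤ (n:ℝ) * (2 * (Nat.choose (n-1) (k-1) : ℝ)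
      * Real.exp (-(2 * (t - ((k:ℝ)-1)/n)^2 / ((k:ℝ)-1)))) := by
    calc (F.card : ℝ) ≤ ((∑ v : Fin n, (Fv v).card : ℕ) : ℝ) := by exact_mod_cast hcount
      _ = ∑ v : Fin n, ((Fv v).card : ℝ) := by push_cast; ring
      _ ≤ ∑ v : Fin n, (2 * (Nat.choose (n-1) (k-1) : ℝ)
          * Real.exp (-(2 * (t - ((k:ℝ)-1)/n)^2 / ((k:ℝ)-1)))) := Finset.sum_le_sum (fun v _ => hper v)
      _ = (n:ℝ) * _ := by
          rw [Finset.sum_const, Finset.card_univ, Fintype.card_fin, nsmul_eq_mul]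
  -- numeric conclusion
  have hE := numeric_final k n hk hn
  rw [← htdef] at hE
  have hC : (Nat.choose (n-1) (k-1) : ℝ) ≤ ((n:ℝ)-1)^(k-1) / (Nat.factorial (k-1) : ℝ) := by
    have h := Nat.choose_le_pow_div (α := ℝ) (k-1) (n-1)
    have hcast : (((n-1:ℕ))^(k-1) : ℝ) = ((n:ℝ)-1)^(k-1) := by
      push_cast [Nat.cast_sub (by omega : 1 ≤ n)]
      ring
    rw [← hcast]
    exact_mod_cast h
  have hEpos : 0 < Real.exp (-(2 * (t - ((k:ℝ)-1)/n)^2 / ((k:ℝ)-1))) := Real.exp_pos _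
  have hprod : 2 * (Nat.choose (n-1) (k-1) : ℝ)
      * Real.exp (-(2 * (t - ((k:ℝ)-1)/n)^2 / ((k:ℝ)-1)))
      ≤ 2 * (((n:ℝ)-1)^(k-1) / (Nat.factorial (k-1) : ℝ))
        * (1/(k:ℝ)^2 * ((n:ℝ)/((n:ℝ)-1))^(k-1)) := by
    have h1 : (0:ℝ) ≤ 2 * (((n:ℝ)-1)^(k-1) / (Nat.factorial (k-1) : ℝ)) := by positivity
    calc 2 * (Nat.choose (n-1) (k-1) : ℝ) * Real.exp (-(2 * (t - ((k:ℝ)-1)/n)^2 / ((k:ℝ)-1)))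
        ≤ 2 * (((n:ℝ)-1)^(k-1) / (Nat.factorial (k-1) : ℝ))
          * Real.exp (-(2 * (t - ((k:ℝ)-1)/n)^2 / ((k:ℝ)-1))) := by
          apply mul_le_mul_of_nonneg_right _ (le_of_lt hEpos)
          linarith [hC]
      _ ≤ _ := mul_le_mul_of_nonneg_left hE h1
  -- final algebra
  have hcollapse : (((n:ℝ)-1))^(k-1) * ((n:ℝ)/((n:ℝ)-1))^(k-1) = (n:ℝ)^(k-1) := by
    rw [← mul_pow, mul_div_cancel₀ _ (ne_of_gt hn1)]
  have hpowk : (n:ℝ)^k = (n:ℝ) * (n:ℝ)^(k-1) := by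
    conv_lhs => rw [show k = (k-1) + 1 by omega]
    rw [pow_succ]
    ring
  have hfact : (Nat.factorial k : ℝ) = (k:ℝ) * (Nat.factorial (k-1) : ℝ) := by
    have := Nat.mul_factorial_pred (by omega : k ≠ 0)
    calc (Nat.factorial k : ℝ) = ((k * Nat.factorial (k-1) : ℕ) : ℝ) := by rw [this]
      _ = (k:ℝ) * (Nat.factorial (k-1) : ℝ) := by push_cast; ring
  have hfpos : (0:ℝ) < (Nat.factorial (k-1) : ℝ) := by exact_mod_cast Nat.factorial_pos (k-1)
  calc (F.card : ℝ)
      ≤ (n:ℝ) * (2 * (Nat.choose (n-1) (k-1) : ℝ)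
        * Real.exp (-(2 * (t - ((k:ℝ)-1)/n)^2 / ((k:ℝ)-1)))) := htotal
    _ ≤ (n:ℝ) * (2 * (((n:ℝ)-1)^(k-1) / (Nat.factorial (k-1) : ℝ))
        * (1/(k:ℝ)^2 * ((n:ℝ)/((n:ℝ)-1))^(k-1))) :=
        mul_le_mul_of_nonneg_left hprod (le_of_lt hn0)
    _ = 2 / (k : ℝ) * (n : ℝ) ^ k / (k.factorial : ℝ) := by
        rw [hfact, hpowk, ← hcollapse]
        field_simp

end Main
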